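/- arXiv:1703.01672 — 2 statements merged into one kernel-verified Lean document; each statement's English description precedes it below -/
import Mathlib

section
/- For every sorted probability distribution p_1 ≥ ⋯ ≥ p_N ≥ 0 and every lying probability 0 ≤ p ≤ 1/2, the zigzag query is at worst halfway between the no-query and the optimal-query guessing times: G_ZZ(X) ≤ (1/2)·(G(X) + G_opt(X)). -/
open Finset

noncomputable def guess (N : ℕ) (q : Fin N → ℝ) : ℝ :=
  Finset.univ.inf' ⟨1, Finset.mem_univ 1⟩
    (fun σ : Equiv.Perm (Fin N) => ∑ k : Fin N, ((k : ℝ) + 1) * q (σ k))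

noncomputable def guessA (N : ℕ) (q : Fin N → ℝ) (p : ℝ) (A : Finset (Fin N)) : ℝ :=
  ∑ y : Bool, Finset.univ.inf' ⟨1, Finset.mem_univ 1⟩
    (fun σ : Equiv.Perm (Fin N) => ∑ k : Fin N,
      ((k : ℝ) + 1) * q (σ k) * (if ((σ k ∈ A) ↔ (y = true)) then 1 - p else p))

noncomputable def guessOpt (N : ℕ) (q : Fin N → ℝ) (p : ℝ) : ℝ :=
  Finset.univ.inf' ⟨∅, Finset.mem_univ ∅⟩ (fun A : Finset (Fin N) => guessA N q p A)

def zigzag (N : ℕ) : Finset (Fin N) := Finset.univ.filter (fun k => (k : ℕ) % 2 = 0)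

noncomputable def wt (N : ℕ) (q : Fin N → ℝ) (p : ℝ) (i j : Fin N) : ℝ :=
  max 0 ((1 - p) * min (q i) (q j) - p * max (q i) (q j))

noncomputable def cut (N : ℕ) (q : Fin N → ℝ) (p : ℝ) (A : Finset (Fin N)) : ℝ :=
  ∑ i ∈ A, ∑ j ∈ Aᶜ, wt N q p i j

noncomputable def maxcut (N : ℕ) (q : Fin N → ℝ) (p : ℝ) : ℝ :=
  Finset.univ.sup' ⟨∅, Finset.mem_univ ∅⟩ (fun A : Finset (Fin N) => cut N q p A)

/-!
Guessing the candidates of a weight vector `v` in decreasing order costs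
`∑ v + ∑_{i < j} min (v i) (v j)`: every pair of candidates contributes its smaller weight once.
Applied to the two posterior weight vectors `q i * answerProb p A i y` of a query `A`, this shows
that the query saves exactly the cut `∑ wt i j` over the pairs `i < j` that `A` separates.
Since `q` is sorted, a pair `i < j` of equal parity weighs at most as much as the pair
`(i, j - 1)` of opposite parity, so the pairs separated by the zigzag partition carry at least
half of the total pair weight, hence at least half of the cut of any query. The zigzag query
therefore saves at least half as much as the optimal one.
-/

def ltPairs (N : ℕ) : Finset (Fin N × Fin N) := univ.filter fun x => x.1 < x.2

section PairSums

variable {N : ℕ}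

@[simp]
lemma mem_ltPairs {x : Fin N × Fin N} : x ∈ ltPairs N ↔ x.1 < x.2 := by
  simp [ltPairs]

lemma sum_ltPairs_snd {R : Type*} [CommSemiring R] (f : Fin N → R) :
    ∑ x ∈ ltPairs N, f x.2 = ∑ k : Fin N, ((k : ℕ) : R) * f k := by
  rw [sum_finset_product_right (ltPairs N) univ Iio (by simp)]
  simp [Fin.card_Iio]

lemma two_mul_sum_ltPairs {R : Type*} [CommRing R] (g : Fin N → Fin N → R)
    (hg : ∀ i j, g i j = g j i) :
    2 * ∑ x ∈ ltPairs N, g x.1 x.2 = ∑ i, ∑ j, g i j - ∑ i, g i i := by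
  have hsplit : ∀ i j, g i j = (if i < j then g i j else 0) + (if j < i then g i j else 0) +
      (if i = j then g i j else 0) := by
    intro i j
    rcases lt_trichotomy i j with h | rfl | h
    · simp [h, h.ne, h.not_gt]
    · simp
    · simp [h, h.ne', h.not_gt]
  have hlt : ∑ x ∈ ltPairs N, g x.1 x.2 = ∑ i, ∑ j, if i < j then g i j else 0 := by
    rw [ltPairs, sum_filter, ← univ_product_univ, sum_product]
  have hgt : ∑ i : Fin N, ∑ j, (if j < i then g i j else 0) =
      ∑ i, ∑ j, if i < j then g i j else 0 := by
    rw [sum_comm]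
    exact sum_congr rfl fun i _ => sum_congr rfl fun j _ => by rw [hg]
  conv_rhs => rw [sum_congr rfl fun i _ => sum_congr rfl fun j _ => hsplit i j]
  simp only [sum_add_distrib, sum_ite_eq, mem_univ, if_true, hgt, ← hlt]
  ring

lemma sum_ltPairs_comp_perm {R : Type*} [Field R] [CharZero R] (g : Fin N → Fin N → R)
    (hg : ∀ i j, g i j = g j i) (σ : Equiv.Perm (Fin N)) :
    ∑ x ∈ ltPairs N, g (σ x.1) (σ x.2) = ∑ x ∈ ltPairs N, g x.1 x.2 := by
  refine mul_left_cancel₀ (two_ne_zero : (2 : R) ≠ 0) ?_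
  rw [two_mul_sum_ltPairs g hg, two_mul_sum_ltPairs (fun i j => g (σ i) (σ j)) fun i j => hg _ _,
    Equiv.sum_comp σ fun i => g i i]
  congr 1
  calc ∑ i, ∑ j, g (σ i) (σ j) = ∑ i, ∑ j, g (σ i) j :=
        sum_congr rfl fun i _ => Equiv.sum_comp σ (g (σ i))
    _ = ∑ i, ∑ j, g i j := Equiv.sum_comp σ fun i => ∑ j, g i j

end PairSums

noncomputable def pairMinSum (N : ℕ) (v : Fin N → ℝ) : ℝ :=
  ∑ x ∈ ltPairs N, min (v x.1) (v x.2)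

section Ranking

variable {N : ℕ}

lemma pairMinSum_comp_perm (v : Fin N → ℝ) (σ : Equiv.Perm (Fin N)) :
    pairMinSum N (v ∘ σ) = pairMinSum N v :=
  sum_ltPairs_comp_perm (fun i j => min (v i) (v j)) (fun _ _ => min_comm _ _) σ

lemma sum_rank_mul_comp_perm {R : Type*} [CommSemiring R] (v : Fin N → R)
    (σ : Equiv.Perm (Fin N)) :
    ∑ k : Fin N, (((k : ℕ) : R) + 1) * v (σ k) =
      ∑ i, v i + ∑ x ∈ ltPairs N, v (σ x.2) := by
  rw [sum_ltPairs_snd (fun k => v (σ k)), ← Equiv.sum_comp σ v, ← sum_add_distrib]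
  exact sum_congr rfl fun k _ => by ring

theorem guess_eq_sum_add_pairMinSum (v : Fin N → ℝ) :
    guess N v = ∑ i, v i + pairMinSum N v := by
  refine le_antisymm ?_ (le_inf' _ _ fun σ _ => ?_)
  · set σ := Tuple.sort fun k => -v k
    have hσ : ∀ x ∈ ltPairs N, v (σ x.2) = min (v (σ x.1)) (v (σ x.2)) := fun x hx =>
      (min_eq_right <| neg_le_neg_iff.1 <|
        Tuple.monotone_sort (fun k => -v k) (mem_ltPairs.1 hx).le).symm
    calc guess N v ≤ ∑ k : Fin N, ((k : ℝ) + 1) * v (σ k) := inf'_le _ (mem_univ σ)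
      _ = ∑ i, v i + pairMinSum N (v ∘ σ) := by
        rw [sum_rank_mul_comp_perm, sum_congr rfl hσ, pairMinSum]; rfl
      _ = ∑ i, v i + pairMinSum N v := by rw [pairMinSum_comp_perm]
  · calc ∑ i, v i + pairMinSum N v = ∑ i, v i + pairMinSum N (v ∘ σ) := by
          rw [pairMinSum_comp_perm]
      _ ≤ ∑ i, v i + ∑ x ∈ ltPairs N, v (σ x.2) :=
          add_le_add_right (sum_le_sum fun x _ => min_le_right _ _) _
      _ = ∑ k : Fin N, ((k : ℝ) + 1) * v (σ k) := (sum_rank_mul_comp_perm v σ).symm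

end Ranking

lemma min_mul_add_min_mul_eq {a b p : ℝ} (ha : 0 ≤ a) (hb : 0 ≤ b) (hp0 : 0 ≤ p)
    (hp : p ≤ 1 / 2) :
    min (a * (1 - p)) (b * p) + min (a * p) (b * (1 - p)) =
      min a b - max 0 ((1 - p) * min a b - p * max a b) := by
  wlog hab : a ≤ b generalizing a b
  · have := this hb ha (le_of_not_ge hab)
    rw [min_comm b, max_comm b, add_comm] at this
    rwa [min_comm (b * _), min_comm (b * _)] at this
  rw [min_eq_left hab, max_eq_right hab, min_eq_left (by nlinarith : a * p ≤ b * (1 - p))]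
  rcases le_total (a * (1 - p)) (b * p) with h | h
  · rw [min_eq_left h, max_eq_left (by nlinarith)]; ring
  · rw [min_eq_right h, max_eq_right (by nlinarith)]; ring

def answerProb {N : ℕ} (p : ℝ) (A : Finset (Fin N)) (i : Fin N) (y : Bool) : ℝ :=
  if (i ∈ A ↔ y = true) then 1 - p else p

noncomputable def pairCut (N : ℕ) (q : Fin N → ℝ) (p : ℝ) (A : Finset (Fin N)) : ℝ :=
  ∑ x ∈ (ltPairs N).filter (fun x => ¬(x.1 ∈ A ↔ x.2 ∈ A)), wt N q p x.1 x.2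

section Query

variable {N : ℕ} {q : Fin N → ℝ} {p : ℝ}

lemma guessA_eq_sum_guess (A : Finset (Fin N)) :
    guessA N q p A = ∑ y : Bool, guess N fun i => q i * answerProb p A i y := by
  simp only [guessA, guess, answerProb, mul_assoc]

lemma sum_mul_answerProb (A : Finset (Fin N)) (i : Fin N) (a : ℝ) :
    ∑ y : Bool, a * answerProb p A i y = a := by
  by_cases hi : i ∈ A <;> simp [answerProb, hi] <;> ring

lemma sum_min_mul_answerProb (hnn : ∀ i, 0 ≤ q i) (hp0 : 0 ≤ p) (hp : p ≤ 1 / 2)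
    (A : Finset (Fin N)) (i j : Fin N) :
    ∑ y : Bool, min (q i * answerProb p A i y) (q j * answerProb p A j y) =
      min (q i) (q j) - if ¬(i ∈ A ↔ j ∈ A) then wt N q p i j else 0 := by
  have hp1 : 0 ≤ 1 - p := by linarith
  by_cases hi : i ∈ A <;> by_cases hj : j ∈ A <;>
    simp only [Fintype.sum_bool, answerProb, wt, hi, hj, iff_true, iff_false, true_iff, false_iff,
      Bool.false_eq_true, not_true, not_false_eq_true, if_true, if_false, sub_zero]
  · rw [← min_mul_of_nonneg _ _ hp1, ← min_mul_of_nonneg _ _ hp0]; ring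
  · exact min_mul_add_min_mul_eq (hnn i) (hnn j) hp0 hp
  · rw [min_comm (q i * p), min_comm (q i * (1 - p)), min_comm (q i), max_comm (q i)]
    exact min_mul_add_min_mul_eq (hnn j) (hnn i) hp0 hp
  · rw [← min_mul_of_nonneg _ _ hp1, ← min_mul_of_nonneg _ _ hp0]; ring

theorem guessA_eq (hnn : ∀ i, 0 ≤ q i) (hp0 : 0 ≤ p) (hp : p ≤ 1 / 2) (A : Finset (Fin N)) :
    guessA N q p A = ∑ i, q i + pairMinSum N q - pairCut N q p A := by
  simp only [guessA_eq_sum_guess, guess_eq_sum_add_pairMinSum, sum_add_distrib, pairMinSum,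
    pairCut]
  have hmass : ∑ y : Bool, ∑ i, q i * answerProb p A i y = ∑ i, q i := by
    rw [sum_comm]
    exact sum_congr rfl fun i _ => sum_mul_answerProb A i (q i)
  have hpairs : ∑ y : Bool, ∑ x ∈ ltPairs N,
      min (q x.1 * answerProb p A x.1 y) (q x.2 * answerProb p A x.2 y) =
      ∑ x ∈ ltPairs N, min (q x.1) (q x.2) -
        ∑ x ∈ (ltPairs N).filter (fun x => ¬(x.1 ∈ A ↔ x.2 ∈ A)), wt N q p x.1 x.2 := by
    rw [sum_comm, sum_congr rfl fun x _ => sum_min_mul_answerProb hnn hp0 hp A x.1 x.2,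
      sum_sub_distrib, sum_filter]
  rw [hmass, hpairs]
  ring

end Query

section Zigzag

variable {N : ℕ} {q : Fin N → ℝ} {p : ℝ}

lemma wt_nonneg (i j : Fin N) : 0 ≤ wt N q p i j := le_max_left _ _

lemma wt_le_wt_of_le (hq : Antitone q) (hp : p ≤ 1) {i j k : Fin N} (hik : i ≤ k)
    (hkj : k ≤ j) :
    wt N q p i j ≤ wt N q p i k := by
  have hij : q j ≤ q i := hq (hik.trans hkj)
  rw [wt, wt, min_eq_right hij, max_eq_left hij, min_eq_right (hq hik), max_eq_left (hq hik)]
  gcongr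
  exact hq hkj

lemma pairCut_le_sum_wt (A : Finset (Fin N)) :
    pairCut N q p A ≤ ∑ x ∈ ltPairs N, wt N q p x.1 x.2 :=
  sum_le_sum_of_subset_of_nonneg (filter_subset _ _) fun _ _ _ => wt_nonneg _ _

lemma pairCut_zigzag :
    pairCut N q p (zigzag N) =
      ∑ x ∈ (ltPairs N).filter (fun x => ¬(x.1 : ℕ) % 2 = x.2 % 2), wt N q p x.1 x.2 := by
  refine sum_congr (filter_congr fun x _ => ?_) fun _ _ => rfl
  simp only [zigzag, mem_filter, mem_univ, true_and]
  omega

lemma sum_wt_sameParity_le (hq : Antitone q) (hp : p ≤ 1) :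
    ∑ x ∈ (ltPairs N).filter (fun x => (x.1 : ℕ) % 2 = x.2 % 2), wt N q p x.1 x.2 ≤
      ∑ x ∈ (ltPairs N).filter (fun x => ¬(x.1 : ℕ) % 2 = x.2 % 2), wt N q p x.1 x.2 := by
  set same := (ltPairs N).filter fun x => (x.1 : ℕ) % 2 = x.2 % 2
  let shift : Fin N × Fin N → Fin N × Fin N := fun x => (x.1, ⟨x.2 - 1, by omega⟩)
  have hgap : ∀ x ∈ same, (x.1 : ℕ) + 2 ≤ x.2 := fun x hx => by
    simp only [same, mem_filter, mem_ltPairs, Fin.lt_def] at hx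
    omega
  calc ∑ x ∈ same, wt N q p x.1 x.2
      ≤ ∑ x ∈ same, wt N q p (shift x).1 (shift x).2 := sum_le_sum fun x hx => by
        have := hgap x hx
        exact wt_le_wt_of_le hq hp (by simp only [shift, Fin.le_def]; omega)
          (by simp only [shift, Fin.le_def]; omega)
    _ = ∑ x ∈ same.image shift, wt N q p x.1 x.2 := by
        rw [sum_image]
        intro x hx y hy hxy
        have := hgap x hx
        have := hgap y hy
        simp only [shift, Prod.mk.injEq, Fin.mk.injEq] at hxy
        exact Prod.ext hxy.1 (Fin.ext (by omega))
    _ ≤ _ := by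
        refine sum_le_sum_of_subset_of_nonneg ?_ fun _ _ _ => wt_nonneg _ _
        intro y hy
        obtain ⟨x, hx, rfl⟩ := mem_image.1 hy
        have := hgap x hx
        simp only [same, mem_filter, mem_ltPairs, Fin.lt_def] at hx ⊢
        simp only [shift]
        omega

lemma pairCut_le_two_mul_pairCut_zigzag (hq : Antitone q) (hp : p ≤ 1) (A : Finset (Fin N)) :
    pairCut N q p A ≤ 2 * pairCut N q p (zigzag N) := by
  have := sum_filter_add_sum_filter_not (ltPairs N) (fun x => (x.1 : ℕ) % 2 = x.2 % 2)
    fun x => wt N q p x.1 x.2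
  linarith [pairCut_le_sum_wt (q := q) (p := p) A, sum_wt_sameParity_le hq hp,
    pairCut_zigzag (q := q) (p := p)]

end Zigzag

theorem stmt_13_general (N : ℕ) (q : Fin N → ℝ)
    (hnn : ∀ i, 0 ≤ q i)
    (hsort : ∀ i j : Fin N, i ≤ j → q j ≤ q i)
    (p : ℝ) (hp0 : 0 ≤ p) (hp : p ≤ 1 / 2) :
    guessA N q p (zigzag N) ≤ (1 / 2) * (guess N q + guessOpt N q p) := by
  have hcut : ∀ A, pairCut N q p A ≤ 2 * pairCut N q p (zigzag N) :=
    pairCut_le_two_mul_pairCut_zigzag (fun i j h => hsort i j h) (by linarith)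
  have hguess := guess_eq_sum_add_pairMinSum q
  have hopt : guess N q - 2 * pairCut N q p (zigzag N) ≤ guessOpt N q p :=
    le_inf' _ _ fun A _ => by linarith [guessA_eq hnn hp0 hp A, hcut A]
  linarith [guessA_eq hnn hp0 hp (zigzag N)]

theorem stmt_13 (N : ℕ) (hN : 1 ≤ N) (q : Fin N → ℝ)
    (hnn : ∀ i, 0 ≤ q i) (hsum : ∑ i, q i = 1)
    (hsort : ∀ i j : Fin N, i ≤ j → q j ≤ q i)
    (p : ℝ) (hp0 : 0 ≤ p) (hp : p ≤ 1 / 2) :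
    guessA N q p (zigzag N) ≤ (1 / 2) * (guess N q + guessOpt N q p) :=
  stmt_13_general N q hnn hsort p hp0 hp
end

section
/- Let N be even, let p_1 ≥ ⋯ ≥ p_N ≥ 0 be a sorted probability distribution, let 0 ≤ p ≤ 1/2, and let A ⊆ {1,…,N} be any C-partition (for every i ∈ {1,…,N/2} exactly one of 2i−1, 2i belongs to A). Then the zigzag cut is at least as large: CUT_ZZ(G_X) ≥ CUT_A(G_X). -/
open Finset

/-!
Pair the indices as blocks `{2b, 2b+1}`. A C-partition `A` chooses one element of every block,
so `CUT_A` is a sum over ordered pairs of blocks `(b, c)` of the weight between the element of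
`b` in `A` and the element of `c` outside `A`. Summing each pair `(b, c)` together with `(c, b)`,
the contributions of `A` and of the zigzag coincide when `A` makes the same choice on `b` and `c`,
and otherwise compare by the exchange inequality `w i₁ j₁ + w i₂ j₂ ≤ w i₁ j₂ + w i₂ j₁` for
`i₁ ≤ i₂ ≤ j₁ ≤ j₂`. For sorted `q` this is convexity of `max 0` applied to the arguments
`(1 - p) q j - p q i`, which have the same sum on both sides.
-/

theorem Finset.sum_sum_le_of_add_swap_le {ι : Type*} (s : Finset ι) {F G : ι → ι → ℝ}
    (h : ∀ b ∈ s, ∀ c ∈ s, F b c + F c b ≤ G b c + G c b) :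
    ∑ b ∈ s, ∑ c ∈ s, F b c ≤ ∑ b ∈ s, ∑ c ∈ s, G b c := by
  have hsum : ∑ b ∈ s, ∑ c ∈ s, (F b c + F c b) ≤ ∑ b ∈ s, ∑ c ∈ s, (G b c + G c b) :=
    sum_le_sum fun b hb => sum_le_sum fun c hc => h b hb c hc
  simp only [sum_add_distrib] at hsum
  rw [sum_comm (f := fun b c => F c b), sum_comm (f := fun b c => G c b)] at hsum
  linarith

theorem max_zero_add_max_zero_le {x y z w : ℝ} (hxy : x ≤ y) (hxz : x ≤ z)
    (h : y + z = x + w) : max 0 y + max 0 z ≤ max 0 x + max 0 w := by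
  simp only [max_def]
  split_ifs <;> linarith

section Transversal

variable {ι κ α β : Type*} [Fintype ι]

theorem Finset.sum_eq_sum_section_of_mem_iff [AddCommMonoid β] (e : ι × κ ≃ α) {t : ι → κ}
    {S : Finset α} (hS : ∀ b r, e (b, r) ∈ S ↔ r = t b) (f : α → β) :
    ∑ a ∈ S, f a = ∑ b, f (e (b, t b)) := by
  refine (sum_nbij' (fun b => e (b, t b)) (fun a => (e.symm a).1) (fun b _ => (hS b _).2 rfl)
    (fun _ _ => mem_univ _) (fun b _ => by simp) ?_ fun _ _ => rfl).symm
  intro a ha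
  obtain ⟨⟨b, r⟩, rfl⟩ := e.surjective a
  simp [(hS b r).1 ha]

theorem Finset.sum_sum_compl_eq_of_mem_iff [AddCommMonoid β] [Fintype α] [DecidableEq α]
    (e : ι × Bool ≃ α) {t : ι → Bool} {S : Finset α} (hS : ∀ b r, e (b, r) ∈ S ↔ r = t b)
    (w : α → α → β) :
    ∑ i ∈ S, ∑ j ∈ Sᶜ, w i j = ∑ b, ∑ c, w (e (b, t b)) (e (c, !t c)) := by
  have hSc : ∀ c r, e (c, r) ∈ Sᶜ ↔ r = !t c := by
    intro c r
    rw [mem_compl, hS]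
    cases r <;> cases t c <;> decide
  rw [sum_eq_sum_section_of_mem_iff e hS]
  exact sum_congr rfl fun b _ => sum_eq_sum_section_of_mem_iff e hSc _

theorem sum_sum_le_of_exchange {w : α → α → ℝ} (hw : ∀ i j, w i j = w j i) (v : ι → Bool → α)
    (hex : ∀ b c, b ≠ c → w (v b false) (v c false) + w (v b true) (v c true) ≤
      w (v b false) (v c true) + w (v b true) (v c false)) (t : ι → Bool) :
    ∑ b, ∑ c, w (v b (t b)) (v c (!t c)) ≤ ∑ b, ∑ c, w (v b false) (v c true) := by
  refine sum_sum_le_of_add_swap_le _ fun b _ c _ => ?_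
  rcases hb : t b <;> rcases hc : t c
  · exact le_rfl
  · have := hex b c (by rintro rfl; simp_all)
    simp only [Bool.not_false, Bool.not_true]
    linarith [hw (v c true) (v b true), hw (v c false) (v b true)]
  · have := hex c b (by rintro rfl; simp_all)
    simp only [Bool.not_false, Bool.not_true]
    linarith [hw (v c true) (v b true), hw (v c true) (v b false)]
  · simp only [Bool.not_true]
    linarith [hw (v b true) (v c false), hw (v c true) (v b false)]

end Transversal

section Weights

variable {N : ℕ} {q : Fin N → ℝ} {p : ℝ}

theorem wt_comm (i j : Fin N) : wt N q p i j = wt N q p j i := by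
  rw [wt, wt, min_comm, max_comm (q i)]

theorem wt_of_le (hq : Antitone q) {i j : Fin N} (hij : i ≤ j) :
    wt N q p i j = max 0 ((1 - p) * q j - p * q i) := by
  rw [wt, min_eq_right (hq hij), max_eq_left (hq hij)]

theorem wt_exchange (hq : Antitone q) (hp0 : 0 ≤ p) (hp1 : p ≤ 1) {i₁ i₂ j₁ j₂ : Fin N}
    (hi : i₁ ≤ i₂) (hij : i₂ ≤ j₁) (hj : j₁ ≤ j₂) :
    wt N q p i₁ j₁ + wt N q p i₂ j₂ ≤ wt N q p i₁ j₂ + wt N q p i₂ j₁ := by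
  rw [wt_of_le hq (hi.trans hij), wt_of_le hq (hij.trans hj),
    wt_of_le hq (hi.trans (hij.trans hj)), wt_of_le hq hij]
  have hqi : p * q i₂ ≤ p * q i₁ := mul_le_mul_of_nonneg_left (hq hi) hp0
  have hqj : (1 - p) * q j₂ ≤ (1 - p) * q j₁ := mul_le_mul_of_nonneg_left (hq hj) (by linarith)
  exact max_zero_add_max_zero_le (by linarith) (by linarith) (by ring)

end Weights

def pairEquiv (M : ℕ) : Fin M × Bool ≃ Fin (2 * M) where
  toFun x := ⟨2 * x.1 + x.2.toNat, by have := x.1.isLt; have := x.2.toNat_le; omega⟩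
  invFun i := (⟨i / 2, by omega⟩, decide (i.val % 2 = 1))
  left_inv := by rintro ⟨b, r⟩; cases r <;> simp [Prod.ext_iff, Fin.ext_iff]; omega
  right_inv i := by ext; by_cases h : i.val % 2 = 1 <;> simp [h] <;> omega

section PairEquiv

variable {M : ℕ}

@[simp]
theorem pairEquiv_val (b : Fin M) (r : Bool) : (pairEquiv M (b, r) : ℕ) = 2 * b + r.toNat :=
  rfl

theorem mem_zigzag_pairEquiv_iff (b : Fin M) (r : Bool) :
    pairEquiv M (b, r) ∈ zigzag (2 * M) ↔ r = false := by
  cases r <;> simp [zigzag, Nat.add_mod]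

theorem pairEquiv_le_pairEquiv {b c : Fin M} (hbc : b < c) (r s : Bool) :
    pairEquiv M (b, r) ≤ pairEquiv M (c, s) := by
  rw [Fin.le_def, pairEquiv_val, pairEquiv_val]
  have : b.val < c.val := hbc
  cases r <;> cases s <;> simp <;> omega

theorem pairEquiv_false_le_true (b : Fin M) : pairEquiv M (b, false) ≤ pairEquiv M (b, true) := by
  simp [Fin.le_def]

theorem wt_pairEquiv_exchange {q : Fin (2 * M) → ℝ} (hq : Antitone q) {p : ℝ} (hp0 : 0 ≤ p)
    (hp1 : p ≤ 1) {b c : Fin M} (hbc : b ≠ c) :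
    wt _ q p (pairEquiv M (b, false)) (pairEquiv M (c, false)) +
        wt _ q p (pairEquiv M (b, true)) (pairEquiv M (c, true)) ≤
      wt _ q p (pairEquiv M (b, false)) (pairEquiv M (c, true)) +
        wt _ q p (pairEquiv M (b, true)) (pairEquiv M (c, false)) := by
  rcases hbc.lt_or_gt with h | h
  · exact wt_exchange hq hp0 hp1 (pairEquiv_false_le_true b) (pairEquiv_le_pairEquiv h _ _)
      (pairEquiv_false_le_true c)
  · have := wt_exchange hq hp0 hp1 (pairEquiv_false_le_true c) (pairEquiv_le_pairEquiv h _ _)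
      (pairEquiv_false_le_true b)
    simp only [wt_comm (pairEquiv M (c, _)) (pairEquiv M (b, _))] at this
    linarith

end PairEquiv

theorem stmt_18_general (N : ℕ) (hNe : Even N) (q : Fin N → ℝ)
    (hsort : ∀ i j : Fin N, i ≤ j → q j ≤ q i)
    (p : ℝ) (hp0 : 0 ≤ p) (hp : p ≤ 1 / 2)
    (A : Finset (Fin N))
    (hA : ∀ i : ℕ, ∀ h1 : 2 * i < N, ∀ h2 : 2 * i + 1 < N,
      ((⟨2 * i, h1⟩ : Fin N) ∈ A ↔ (⟨2 * i + 1, h2⟩ : Fin N) ∉ A)) :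
    cut N q p A ≤ cut N q p (zigzag N) := by
  obtain ⟨M, rfl⟩ := even_iff_two_dvd.mp hNe
  let t : Fin M → Bool := fun b => decide (pairEquiv M (b, true) ∈ A)
  have hAt : ∀ b r, pairEquiv M (b, r) ∈ A ↔ r = t b := by
    intro b r
    have hpair : pairEquiv M (b, false) ∈ A ↔ pairEquiv M (b, true) ∉ A := hA b _ _
    cases r <;> simp [t, hpair]
  rw [cut, cut, sum_sum_compl_eq_of_mem_iff _ hAt,
    sum_sum_compl_eq_of_mem_iff _ (t := fun _ => false) mem_zigzag_pairEquiv_iff]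
  exact sum_sum_le_of_exchange wt_comm (fun b r => pairEquiv M (b, r))
    (fun b c hbc => wt_pairEquiv_exchange hsort hp0 (by linarith) hbc) t

theorem stmt_18 (N : ℕ) (hN : 1 ≤ N) (hNe : Even N) (q : Fin N → ℝ)
    (hnn : ∀ i, 0 ≤ q i) (hsum : ∑ i, q i = 1)
    (hsort : ∀ i j : Fin N, i ≤ j → q j ≤ q i)
    (p : ℝ) (hp0 : 0 ≤ p) (hp : p ≤ 1 / 2)
    (A : Finset (Fin N))
    (hA : ∀ i : ℕ, ∀ h1 : 2 * i < N, ∀ h2 : 2 * i + 1 < N,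
      ((⟨2 * i, h1⟩ : Fin N) ∈ A ↔ (⟨2 * i + 1, h2⟩ : Fin N) ∉ A)) :
    cut N q p A ≤ cut N q p (zigzag N) :=
  stmt_18_general N hNe q hsort p hp0 hp A hA
end
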